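/- Let P be the null-hypothesis measure and suppose the risk-free interest rate is 0. Let an investigator's portfolio value be |K_t| = K_t^{free} + K_t^{risky} + K_t^{deriv}, where K_t^{free} is constant between rebalancings, K_t^{risky} is a predictable number of shares times a nonnegative P-martingale, and K_t^{deriv} is the value of a derivative contract priced at its risk-neutral price, so that E_P[K_t^{deriv} | K_1,…,K_{t-1}] = K_{t-1}^{deriv}. Assume |K_0| = 1 and that trading (shorting, loans, purchasing or issuing derivative contracts) is constrained so that the probability of negative portfolio value is 0. Then |K_t| is a nonnegative martingale under P with |K_0| = 1, and for every α ∈ (0,1), P(∃ t ∈ ℕ such that |K_t| ≥ 1/α) ≤ α; i.e., rejecting when |K_t| ≥ 1/α is an anytime-valid level-α sequential test. -/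

import Mathlib

open MeasureTheory Filter
open scoped NNReal ProbabilityTheory

/-! Rebalancing at time-`t` prices makes the cash held over `(t, t + 1]` an `ℱ t`-measurable
quantity, and the positions in the risky asset and in the derivative are predictable, so they
pull out of the conditional expectation given `ℱ t`; as both prices are martingales, the
conditional expectation of the next portfolio value is the value after rebalancing, i.e. the
current value. Ville's inequality is Doob's maximal inequality for the positive part of this
martingale (equal to it a.s.) on each finite horizon `[0, n]`, followed by continuity of `μ`
from below as `n → ∞`. -/

namespace MeasureTheory

variable {Ω : Type*} {m0 : MeasurableSpace Ω} {μ : Measure Ω}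

section PredictablePosition

variable {ι : Type*} [Preorder ι] {ℱ : Filtration ι m0} {X : ι → Ω → ℝ}

theorem Martingale.condExp_mul_ae_eq (hX : Martingale X ℱ μ) {i j : ι} (hij : i ≤ j)
    {f : Ω → ℝ} (hf : StronglyMeasurable[ℱ i] f) (hfX : Integrable (f * X j) μ) :
    μ[f * X j | ℱ i] =ᵐ[μ] f * X i := by
  filter_upwards [condExp_mul_of_stronglyMeasurable_left hf hfX (hX.integrable j),
    hX.condExp_ae_eq hij] with ω hmul hX_ω
  rw [hmul, Pi.mul_apply, hX_ω, Pi.mul_apply]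

end PredictablePosition

section Portfolio

variable {ι : Type*} [Fintype ι] {ℱ : Filtration ℕ m0}

def portfolioValue (F : ℕ → Ω → ℝ) (S X : ι → ℕ → Ω → ℝ) : ℕ → Ω → ℝ :=
  fun t ω => F t ω + ∑ i, S i t ω * X i t ω

def IsSelfFinancing (F : ℕ → Ω → ℝ) (S X : ι → ℕ → Ω → ℝ) : Prop :=
  ∀ t ω, F (t + 1) ω + ∑ i, S i (t + 1) ω * X i t ω = portfolioValue F S X t ω

variable {F : ℕ → Ω → ℝ} {S X : ι → ℕ → Ω → ℝ}

theorem IsSelfFinancing.stronglyMeasurable_cash_succ (hsf : IsSelfFinancing F S X)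
    (hF : StronglyAdapted ℱ F) (hS : ∀ i, IsStronglyPredictable ℱ (S i))
    (hX : ∀ i, StronglyAdapted ℱ (X i)) (t : ℕ) : StronglyMeasurable[ℱ t] (F (t + 1)) := by
  have hcash : F (t + 1) = portfolioValue F S X t - ∑ i, S i (t + 1) * X i t := by
    ext ω
    simp only [Pi.sub_apply, Finset.sum_apply, Pi.mul_apply, ← hsf t ω, add_sub_cancel_right]
  rw [hcash]
  exact ((hF t).add (Finset.stronglyMeasurable_fun_sum _ fun i _ =>
    ((hS i).stronglyAdapted t).mul (hX i t))).sub
    (Finset.stronglyMeasurable_sum _ fun i _ => ((hS i).measurable_add_one t).mul (hX i t))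

theorem IsSelfFinancing.martingale_portfolioValue [IsFiniteMeasure μ]
    (hsf : IsSelfFinancing F S X) (hF : StronglyAdapted ℱ F)
    (hS : ∀ i, IsStronglyPredictable ℱ (S i)) (hX : ∀ i, Martingale (X i) ℱ μ)
    (hF_int : ∀ t, Integrable (F t) μ) (hSX_int : ∀ i t, Integrable (S i t * X i t) μ) :
    Martingale (portfolioValue F S X) ℱ μ := by
  have hV_int : ∀ t, Integrable (portfolioValue F S X t) μ := fun t =>
    (hF_int t).add (integrable_finsetSum _ fun i _ => hSX_int i t)
  refine martingale_nat (fun t => ?_) hV_int fun t => ?_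
  · exact (hF t).add (Finset.stronglyMeasurable_fun_sum _ fun i _ =>
      ((hS i).stronglyAdapted t).mul ((hX i).stronglyAdapted t))
  have hcash : μ[F (t + 1) | ℱ t] = F (t + 1) := condExp_of_stronglyMeasurable (ℱ.le t)
    (hsf.stronglyMeasurable_cash_succ hF hS (fun i => (hX i).stronglyAdapted) t) (hF_int _)
  have hassets : μ[∑ i, S i (t + 1) * X i (t + 1) | ℱ t] =ᵐ[μ] ∑ i, S i (t + 1) * X i t :=
    (condExp_finsetSum (fun i _ => hSX_int i _) _).trans <| eventuallyEq_sum fun i _ =>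
      (hX i).condExp_mul_ae_eq t.le_succ ((hS i).measurable_add_one t) (hSX_int i _)
  have hsplit : portfolioValue F S X (t + 1) = F (t + 1) + ∑ i, S i (t + 1) * X i (t + 1) := by
    ext ω
    simp [portfolioValue]
  rw [hsplit]
  refine ((condExp_add (hF_int _) (integrable_finsetSum' _ fun i _ => hSX_int i _) _).trans
    ?_).symm
  filter_upwards [hassets] with ω hω
  simp only [Pi.add_apply, hcash, hω, Finset.sum_apply, Pi.mul_apply, hsf t ω]

end Portfolio

section Ville

variable [IsFiniteMeasure μ] {ℱ : Filtration ℕ m0}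

theorem Submartingale.mul_measure_exists_le_le {f : ℕ → Ω → ℝ} (hf : Submartingale f ℱ μ)
    (hf_nonneg : 0 ≤ f) (ε : ℝ≥0) {C : ℝ} (hC : ∀ n, μ[f n] ≤ C) :
    ε * μ {ω | ∃ t, (ε : ℝ) ≤ f t ω} ≤ ENNReal.ofReal C := by
  set A : ℕ → Set Ω := fun n =>
    {ω | (ε : ℝ) ≤ (Finset.range (n + 1)).sup' Finset.nonempty_range_add_one fun k => f k ω}
  have hA_mono : Monotone A := fun n m hnm ω (hω : (ε : ℝ) ≤ _) => hω.trans <|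
    Finset.sup'_mono _ (Finset.range_subset_range.2 (by omega)) Finset.nonempty_range_add_one
  have hcover : {ω | ∃ t, (ε : ℝ) ≤ f t ω} ⊆ ⋃ n, A n := fun ω ⟨t, ht⟩ => Set.mem_iUnion.2
    ⟨t, ht.trans (Finset.le_sup' (fun k => f k ω) (Finset.self_mem_range_succ t))⟩
  have hA : ∀ n, ε * μ (A n) ≤ ENNReal.ofReal C := fun n =>
    (maximal_ineq hf hf_nonneg n).trans <| ENNReal.ofReal_le_ofReal <|
      (setIntegral_le_integral (hf.integrable n) (Eventually.of_forall (hf_nonneg n))).trans (hC n)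
  calc ε * μ {ω | ∃ t, (ε : ℝ) ≤ f t ω} ≤ ε * μ (⋃ n, A n) := by gcongr
    _ = ⨆ n, ε * μ (A n) := by rw [hA_mono.directed_le.measure_iUnion, ENNReal.mul_iSup]
    _ ≤ ENNReal.ofReal C := iSup_le hA

theorem Martingale.integral_eq_integral_zero {V : ℕ → Ω → ℝ} (hV : Martingale V ℱ μ) (t : ℕ) :
    μ[V t] = μ[V 0] := by
  simpa using (hV.setIntegral_eq (Nat.zero_le t) MeasurableSet.univ).symm

/-- **Ville's inequality**. -/
theorem Martingale.measure_exists_le_le {V : ℕ → Ω → ℝ} (hV : Martingale V ℱ μ)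
    (hV_nonneg : ∀ t, 0 ≤ᵐ[μ] V t) {c : ℝ} (hc : 0 < c) :
    μ {ω | ∃ t, c ≤ V t ω} ≤ ENNReal.ofReal (μ[V 0] / c) := by
  have hpos_int : ∀ n, μ[V⁺ n] = μ[V 0] := fun n =>
    (integral_congr_ae ((hV_nonneg n).mono fun ω hω => posPart_eq_self.2 hω)).trans
      (hV.integral_eq_integral_zero n)
  have hmax := hV.submartingale.pos.mul_measure_exists_le_le (fun t ω => posPart_nonneg (V t ω))
    c.toNNReal fun n => (hpos_int n).le
  rw [Real.coe_toNNReal _ hc.le] at hmax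
  calc μ {ω | ∃ t, c ≤ V t ω} ≤ μ {ω | ∃ t, c ≤ V⁺ t ω} :=
        measure_mono fun ω ⟨t, ht⟩ => ⟨t, ht.trans (le_posPart (V t ω))⟩
    _ ≤ ENNReal.ofReal (μ[V 0]) / ENNReal.ofReal c := by
        rw [ENNReal.le_div_iff_mul_le (Or.inl (by simpa using hc)) (Or.inl ENNReal.ofReal_ne_top),
          mul_comm]
        exact hmax
    _ = ENNReal.ofReal (μ[V 0] / c) := (ENNReal.ofReal_div_of_pos hc).symm

end Ville

end MeasureTheory

theorem derivative_portfolio_ville_general {Ω : Type*} {m0 : MeasurableSpace Ω}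
    (μ : Measure Ω) [IsProbabilityMeasure μ] (ℱ : Filtration ℕ m0)
    (M P S H F : ℕ → Ω → ℝ)
    (hM : Martingale M ℱ μ)
    (hPadapted : Adapted ℱ P) (hPint : ∀ t, Integrable (P t) μ)
    (hPmart : ∀ t, μ[P (t + 1) | ℱ t] =ᵐ[μ] P t)
    (hSadapted : Adapted ℱ S) (hSpred : ∀ t, StronglyMeasurable[ℱ t] (S (t + 1)))
    (hHadapted : Adapted ℱ H) (hHpred : ∀ t, StronglyMeasurable[ℱ t] (H (t + 1)))
    (hFadapted : Adapted ℱ F)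
    (hrebal : ∀ t ω, F (t + 1) ω + S (t + 1) ω * M t ω + H (t + 1) ω * P t ω
      = F t ω + S t ω * M t ω + H t ω * P t ω)
    (hV0 : ∀ᵐ ω ∂μ, F 0 ω + S 0 ω * M 0 ω + H 0 ω * P 0 ω = 1)
    (hVpos : ∀ t, ∀ᵐ ω ∂μ, 0 ≤ F t ω + S t ω * M t ω + H t ω * P t ω)
    (hFint : ∀ t, Integrable (F t) μ)
    (hSMint : ∀ t, Integrable (fun ω => S t ω * M t ω) μ)
    (hHPint : ∀ t, Integrable (fun ω => H t ω * P t ω) μ) :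
    Martingale (fun t ω => F t ω + S t ω * M t ω + H t ω * P t ω) ℱ μ ∧
    (∀ᵐ ω ∂μ, F 0 ω + S 0 ω * M 0 ω + H 0 ω * P 0 ω = 1) ∧
    (∀ t, ∀ᵐ ω ∂μ, 0 ≤ F t ω + S t ω * M t ω + H t ω * P t ω) ∧
    (∀ α : ℝ, α ∈ Set.Ioo (0:ℝ) 1 →
      μ {ω | ∃ t : ℕ, 1/α ≤ F t ω + S t ω * M t ω + H t ω * P t ω}
        ≤ ENNReal.ofReal α) := by
  have hP : Martingale P ℱ μ :=
    martingale_nat hPadapted.stronglyAdapted hPint fun t => (hPmart t).symm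
  have hV : Martingale (fun t ω => F t ω + S t ω * M t ω + H t ω * P t ω) ℱ μ := by
    have hsf : IsSelfFinancing F ![S, H] ![M, P] := fun t ω => by
      simpa [portfolioValue, add_assoc] using hrebal t ω
    have hvalue : (fun t ω => F t ω + S t ω * M t ω + H t ω * P t ω)
        = portfolioValue F ![S, H] ![M, P] := by
      ext t ω
      simp [portfolioValue, add_assoc]
    rw [hvalue]
    exact hsf.martingale_portfolioValue hFadapted.stronglyAdapted
      (Fin.forall_fin_two.2 ⟨.of_measurable_add_one (hSadapted 0).stronglyMeasurable hSpred,
        .of_measurable_add_one (hHadapted 0).stronglyMeasurable hHpred⟩)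
      (Fin.forall_fin_two.2 ⟨hM, hP⟩) hFint (Fin.forall_fin_two.2 ⟨hSMint, hHPint⟩)
  refine ⟨hV, hV0, hVpos, fun α ⟨hα, _⟩ => ?_⟩
  calc _ ≤ ENNReal.ofReal ((∫ ω, F 0 ω + S 0 ω * M 0 ω + H 0 ω * P 0 ω ∂μ) / (1 / α)) :=
        hV.measure_exists_le_le hVpos (by positivity)
    _ = ENNReal.ofReal α := by simp [integral_congr_ae hV0]

/-- Portfolio with derivative contracts. Let `M` be a nonnegative martingale
under the null measure `μ` (risky test wealth process) and `P` the price process of a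
derivative contract priced at its risk-neutral price, so that `P` is a `μ`-martingale
(`E[P (t+1) | ℱ t] = P t`, the risk-neutral measure being indistinguishable from the null
and the rate 0). The investigator holds predictable positions `S` (risky shares) and `H`
(derivative contracts), and cash `F`; rebalancing conserves total value. If the initial
value is 1 and trading is constrained so that the portfolio value
`V t = F t + S t * M t + H t * P t` is nonnegative a.s. (probability of negative wealth is
0), then `V` is a nonnegative martingale with `V 0 = 1` and, by Ville's inequality,
`μ(∃ t, V t ≥ 1/α) ≤ α` for every `α ∈ (0,1)`: rejecting when `V t ≥ 1/α` is an
anytime-valid level-`α` sequential test. -/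
theorem derivative_portfolio_ville {Ω : Type*} {m0 : MeasurableSpace Ω}
    (μ : Measure Ω) [IsProbabilityMeasure μ] (ℱ : Filtration ℕ m0)
    (M P S H F : ℕ → Ω → ℝ)
    (hM : Martingale M ℱ μ) (hMpos : ∀ t ω, 0 ≤ M t ω)
    (hPadapted : Adapted ℱ P) (hPint : ∀ t, Integrable (P t) μ)
    (hPmart : ∀ t, μ[P (t + 1) | ℱ t] =ᵐ[μ] P t)
    (hSadapted : Adapted ℱ S) (hSpred : ∀ t, StronglyMeasurable[ℱ t] (S (t + 1)))
    (hHadapted : Adapted ℱ H) (hHpred : ∀ t, StronglyMeasurable[ℱ t] (H (t + 1)))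
    (hFadapted : Adapted ℱ F)
    (hrebal : ∀ t ω, F (t + 1) ω + S (t + 1) ω * M t ω + H (t + 1) ω * P t ω
      = F t ω + S t ω * M t ω + H t ω * P t ω)
    (hV0 : ∀ᵐ ω ∂μ, F 0 ω + S 0 ω * M 0 ω + H 0 ω * P 0 ω = 1)
    (hVpos : ∀ t, ∀ᵐ ω ∂μ, 0 ≤ F t ω + S t ω * M t ω + H t ω * P t ω)
    (hFint : ∀ t, Integrable (F t) μ)
    (hSMint : ∀ t, Integrable (fun ω => S t ω * M t ω) μ)
    (hHPint : ∀ t, Integrable (fun ω => H t ω * P t ω) μ) :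
    Martingale (fun t ω => F t ω + S t ω * M t ω + H t ω * P t ω) ℱ μ ∧
    (∀ᵐ ω ∂μ, F 0 ω + S 0 ω * M 0 ω + H 0 ω * P 0 ω = 1) ∧
    (∀ t, ∀ᵐ ω ∂μ, 0 ≤ F t ω + S t ω * M t ω + H t ω * P t ω) ∧
    (∀ α : ℝ, α ∈ Set.Ioo (0:ℝ) 1 →
      μ {ω | ∃ t : ℕ, 1/α ≤ F t ω + S t ω * M t ω + H t ω * P t ω}
        ≤ ENNReal.ofReal α) :=
  derivative_portfolio_ville_general μ ℱ M P S H F hM hPadapted hPint hPmart hSadapted hSpred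
    hHadapted hHpred hFadapted hrebal hV0 hVpos hFint hSMint hHPint
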